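/- Let H be a Hopf algebra with a symmetric left partial action · : H ⊗ A → A on a unital algebra A. Then for all h,k ∈ H and a,b ∈ A one has (h_(1)·a)(h_(2)·(k·b)) = (h_(1)·a)(h_(2)k·b). -/
import Mathlib


open TensorProduct

/-- Sweedler-style sum `h ↦ Σ f(h₍₁₎) * g(h₍₂₎)` for linear maps `f g : H →ₗ[k] A`,
with respect to a bilinear multiplication `mul` on `A`. -/
noncomputable def sweedler {k H A : Type*} [CommRing k] [Ring H] [HopfAlgebra k H]
    [AddCommGroup A] [Module k A]
    (mul : A →ₗ[k] A →ₗ[k] A) (f g : H →ₗ[k] A) : H →ₗ[k] A :=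
  TensorProduct.lift ((mul ∘ₗ f).compl₂ g) ∘ₗ Coalgebra.comul

/-- A symmetric left partial action of a Hopf algebra `H` on a unital `k`-algebra `A`:
(LPA1) `1_H · a = a`; (LPA2) `h·(ab) = (h₍₁₎·a)(h₍₂₎·b)`;
(LPA3) `h·(g·a) = (h₍₁₎·1)(h₍₂₎g·a) = (h₍₁₎g·a)(h₍₂₎·1)`. -/
structure IsLeftPartialAction (k : Type*) {H A : Type*} [CommRing k] [Ring H]
    [HopfAlgebra k H] [Ring A] [Algebra k A]
    (act : H →ₗ[k] A →ₗ[k] A) : Prop where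
  lpa1 : ∀ a : A, act 1 a = a
  lpa2 : ∀ (h : H) (a b : A),
    act h (a * b) = sweedler (LinearMap.mul k A) (act.flip a) (act.flip b) h
  lpa3 : ∀ (h g : H) (a : A),
    act h (act g a) =
      sweedler (LinearMap.mul k A) (act.flip 1)
        ((act.flip a) ∘ₗ LinearMap.mulRight k g) h
  lpa3' : ∀ (h g : H) (a : A),
    act h (act g a) =
      sweedler (LinearMap.mul k A) ((act.flip a) ∘ₗ LinearMap.mulRight k g)
        (act.flip 1) h

section Aux

variable {k H A : Type*} [CommRing k] [Ring H] [HopfAlgebra k H] [Ring A] [Algebra k A]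

open LinearMap

lemma sweedler_eq (f g : H →ₗ[k] A) :
    sweedler (LinearMap.mul k A) f g =
      LinearMap.mul' k A ∘ₗ TensorProduct.map f g ∘ₗ Coalgebra.comul := by
  have e : TensorProduct.lift ((LinearMap.mul k A ∘ₗ f).compl₂ g) =
      LinearMap.mul' k A ∘ₗ TensorProduct.map f g :=
    TensorProduct.ext' (by intro x y; simp [LinearMap.mul'_apply])
  unfold sweedler
  rw [e, LinearMap.comp_assoc]

lemma sweedler_assoc (f g p : H →ₗ[k] A) :
    sweedler (LinearMap.mul k A) f (sweedler (LinearMap.mul k A) g p) =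
      sweedler (LinearMap.mul k A) (sweedler (LinearMap.mul k A) f g) p := by
  set M := LinearMap.mul' k A with hM
  have d1 : TensorProduct.map f (M ∘ₗ TensorProduct.map g p ∘ₗ Coalgebra.comul) =
      M.lTensor A ∘ₗ (TensorProduct.map g p).lTensor A ∘ₗ
        f.rTensor (H ⊗[k] H) ∘ₗ (Coalgebra.comul (R := k) (A := H)).lTensor H := by
    apply TensorProduct.ext'
    intro x y
    simp
  have d2 : TensorProduct.map (M ∘ₗ TensorProduct.map f g ∘ₗ Coalgebra.comul) p =
      M.rTensor A ∘ₗ (TensorProduct.map f g).rTensor A ∘ₗ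
        p.lTensor (H ⊗[k] H) ∘ₗ (Coalgebra.comul (R := k) (A := H)).rTensor H := by
    apply TensorProduct.ext'
    intro x y
    simp
  have key : M ∘ₗ M.lTensor A ∘ₗ (TensorProduct.map g p).lTensor A ∘ₗ
        f.rTensor (H ⊗[k] H) ∘ₗ (TensorProduct.assoc k H H H).toLinearMap =
      M ∘ₗ M.rTensor A ∘ₗ (TensorProduct.map f g).rTensor A ∘ₗ
        p.lTensor (H ⊗[k] H) := by
    apply TensorProduct.ext_threefold
    intro x y z
    simp [hM, LinearMap.mul'_apply, mul_assoc]
  rw [sweedler_eq, sweedler_eq, sweedler_eq, sweedler_eq, d1, d2]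
  ext h
  simp only [LinearMap.coe_comp, Function.comp_apply]
  rw [← Coalgebra.coassoc_apply (R := k) h]
  have := LinearMap.congr_fun key
    ((Coalgebra.comul (R := k) (A := H)).rTensor H (Coalgebra.comul h))
  simp only [LinearMap.coe_comp, Function.comp_apply, LinearEquiv.coe_coe] at this
  exact this

lemma sweedler_one_right (act : H →ₗ[k] A →ₗ[k] A) (hact : IsLeftPartialAction k act)
    (a : A) :
    sweedler (LinearMap.mul k A) (act.flip a) (act.flip 1) = act.flip a := by
  ext h
  have := hact.lpa2 h a 1
  rw [mul_one] at this
  exact this.symm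

end Aux

/-- For a symmetric left partial action one has
`(h₍₁₎·a)(h₍₂₎·(g·b)) = (h₍₁₎·a)(h₍₂₎g·b)` for all `h g ∈ H`, `a b ∈ A`. -/
theorem leftPartialAction_sweedler_mul_act
    {k H A : Type*} [CommRing k] [Ring H] [HopfAlgebra k H] [Ring A] [Algebra k A]
    (act : H →ₗ[k] A →ₗ[k] A) (hact : IsLeftPartialAction k act)
    (h g : H) (a b : A) :
    sweedler (LinearMap.mul k A) (act.flip a) (act.flip (act g b)) h =
      sweedler (LinearMap.mul k A) (act.flip a)
        ((act.flip b) ∘ₗ LinearMap.mulRight k g) h := by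
   
  have hSv : act.flip (act g b) =
      sweedler (LinearMap.mul k A) (act.flip 1)
        ((act.flip b) ∘ₗ LinearMap.mulRight k g) := by
    ext h'
    exact hact.lpa3 h' g b
  rw [hSv, sweedler_assoc, sweedler_one_right act hact]
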